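/- arXiv:1507.02642 — 3 statements merged into one kernel-verified Lean document; each statement's English description precedes it below -/
import Mathlib

section
/- Let P : X → ℝ≥0 on a finite set X with Z := ∑_x P(x) > 0, let Q be a strictly positive probability distribution on X, let κ_A, Z_Q > 0, and suppose ε ∈ [0,1) satisfies ∑_{x∈bad}(P(x) − κ_A·Z_Q·Q(x)) ≤ ε·Z, where bad = {x : P(x) > κ_A·Z_Q·Q(x)}. Then the acceptance probability P_accept := ∑_{x∉bad} P(x)/(Z_Q·κ_A) + ∑_{x∈bad} Q(x) satisfies P_accept ≥ Z·(1 − ε)/(Z_Q·κ_A). -/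
theorem Finset.sum_filter_not_div_add_sum_filter {X : Type*} (s : Finset X) (p : X → Prop)
    [DecidablePred p] (P Q : X → ℝ) {c : ℝ} (hc : c ≠ 0) :
    ∑ x ∈ s.filter (fun x => ¬ p x), P x / c + ∑ x ∈ s.filter p, Q x
      = (∑ x ∈ s, P x - ∑ x ∈ s.filter p, (P x - c * Q x)) / c := by
  have hQ : ∀ x, Q x = (P x - (P x - c * Q x)) / c := fun x => by field_simp; ring
  calc ∑ x ∈ s.filter (fun x => ¬ p x), P x / c + ∑ x ∈ s.filter p, Q x
      = ∑ x ∈ s.filter (fun x => ¬ p x), P x / c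
          + ∑ x ∈ s.filter p, (P x - (P x - c * Q x)) / c :=
        congrArg _ (Finset.sum_congr rfl fun x _ => hQ x)
    _ = (∑ x ∈ s.filter p, P x + ∑ x ∈ s.filter (fun x => ¬ p x), P x
          - ∑ x ∈ s.filter p, (P x - c * Q x)) / c := by
        rw [← Finset.sum_div, ← Finset.sum_div, Finset.sum_sub_distrib]; ring
    _ = _ := by rw [Finset.sum_filter_add_sum_filter_not]

theorem acceptance_prob_lower_bound_general {X : Type*} [Fintype X] (P Q : X → ℝ) (κA ZQ ε : ℝ)
    (hκ : 0 < κA) (hZQ : 0 < ZQ)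
    (hbad : ∑ x ∈ Finset.univ.filter (fun x => P x > κA * ZQ * Q x), (P x - κA * ZQ * Q x)
              ≤ ε * ∑ x, P x) :
    (∑ x ∈ Finset.univ.filter (fun x => ¬ P x > κA * ZQ * Q x), P x / (ZQ * κA))
      + ∑ x ∈ Finset.univ.filter (fun x => P x > κA * ZQ * Q x), Q x
      ≥ (∑ x, P x) * (1 - ε) / (ZQ * κA) := by
  have hc : 0 < κA * ZQ := mul_pos hκ hZQ
  rw [mul_comm ZQ κA, Finset.sum_filter_not_div_add_sum_filter _ _ _ _ hc.ne']
  exact div_le_div_of_nonneg_right (by linarith) hc.le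

theorem acceptance_prob_lower_bound {X : Type*} [Fintype X] (P Q : X → ℝ) (κA ZQ ε : ℝ)
    (hP : ∀ x, 0 ≤ P x) (hQ : ∀ x, 0 < Q x) (hQsum : ∑ x, Q x = 1)
    (hZ : 0 < ∑ x, P x) (hκ : 0 < κA) (hZQ : 0 < ZQ)
    (hε0 : 0 ≤ ε) (hε1 : ε < 1)
    (hbad : ∑ x ∈ Finset.univ.filter (fun x => P x > κA * ZQ * Q x), (P x - κA * ZQ * Q x)
              ≤ ε * ∑ x, P x) :
    (∑ x ∈ Finset.univ.filter (fun x => ¬ P x > κA * ZQ * Q x), P x / (ZQ * κA))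
      + ∑ x ∈ Finset.univ.filter (fun x => P x > κA * ZQ * Q x), Q x
      ≥ (∑ x, P x) * (1 - ε) / (ZQ * κA) :=
  acceptance_prob_lower_bound_general P Q κA ZQ ε hκ hZQ hbad
end

section
/- Under the hypotheses of the previous statement, define the output distribution of approximate rejection sampling by P̃(x) = P(x)/N for x ∉ bad and P̃(x) = κ_A·Z_Q·Q(x)/N for x ∈ bad, where N = Z + ∑_{x∈bad}(κ_A·Z_Q·Q(x) − P(x)) is the normalizing constant. Then the Bhattacharyya-type fidelity satisfies ∑_x √(P̃(x)·P(x)/Z) ≥ 1 − ε. -/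
/-! Approximate rejection sampling outputs the normalisation of the clipped weights
`m = min(P, κ_A Z_Q Q)`. Since `m ≤ P`, each Bhattacharyya term `√(m P)` dominates `m`, so the
fidelity is at least `N / √(N Z) = √(N / Z) ≥ N / Z`, and the hypothesis on the excess mass of
the bad set says exactly that `N ≥ (1 - ε) Z`. -/

open Finset

lemma le_sqrt_mul_of_le {a b : ℝ} (hab : a ≤ b) : a ≤ √(a * b) := by
  rcases lt_or_ge a 0 with ha | ha
  · exact ha.le.trans (Real.sqrt_nonneg _)
  · calc a = √(a * a) := (Real.sqrt_mul_self ha).symm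
      _ ≤ √(a * b) := Real.sqrt_le_sqrt (mul_le_mul_of_nonneg_left hab ha)

lemma sum_div_sum_le_sum_sqrt_mul {X : Type*} [Fintype X] {m P : X → ℝ}
    (hmP : ∀ x, m x ≤ P x) (hm : 0 < ∑ x, m x) :
    (∑ x, m x) / ∑ x, P x ≤ ∑ x, √(m x / (∑ y, m y) * (P x / ∑ y, P y)) := by
  set N := ∑ x, m x
  set Z := ∑ x, P x
  have hNZ : N ≤ Z := sum_le_sum fun x _ => hmP x
  have hZ : 0 < Z := hm.trans_le hNZ
  have hroot : 0 < √(N * Z) := Real.sqrt_pos.mpr (mul_pos hm hZ)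
  have hterm (x : X) : √(m x / N * (P x / Z)) = √(m x * P x) / √(N * Z) := by
    rw [div_mul_div_comm, Real.sqrt_div' _ (mul_pos hm hZ).le]
  calc N / Z ≤ N / √(N * Z) := by
        refine div_le_div_of_nonneg_left hm.le hroot ?_
        calc √(N * Z) ≤ √(Z * Z) := Real.sqrt_le_sqrt (by nlinarith)
          _ = Z := Real.sqrt_mul_self hZ.le
    _ ≤ ∑ x, √(m x * P x) / √(N * Z) := by
        rw [← sum_div]
        exact div_le_div_of_nonneg_right
          (sum_le_sum fun x _ => le_sqrt_mul_of_le (hmP x)) hroot.le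
    _ = ∑ x, √(m x / N * (P x / Z)) := by simp only [hterm]

lemma ite_gt_le_self {α : Type*} [LinearOrder α] (a b : α) : (if a > b then b else a) ≤ a := by
  split_ifs with h
  · exact h.le
  · exact le_rfl

section Clipping

variable {X : Type*} [Fintype X] (P T : X → ℝ)

lemma sum_ite_gt_eq_add_sum_filter :
    ∑ x, (if P x > T x then T x else P x)
      = ∑ x, P x + ∑ x ∈ univ.filter (fun x => P x > T x), (T x - P x) := by
  rw [sum_ite, ← sum_filter_add_sum_filter_not univ (fun x => P x > T x) P, sum_sub_distrib]
  ring

variable {P T}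

lemma one_sub_mul_sum_le_sum_ite_gt {ε : ℝ}
    (hbad : ∑ x ∈ univ.filter (fun x => P x > T x), (P x - T x) ≤ ε * ∑ x, P x) :
    (1 - ε) * ∑ x, P x ≤ ∑ x, (if P x > T x then T x else P x) := by
  rw [sum_ite_gt_eq_add_sum_filter]
  have hneg : ∑ x ∈ univ.filter (fun x => P x > T x), (T x - P x)
      = -∑ x ∈ univ.filter (fun x => P x > T x), (P x - T x) := by
    rw [← sum_neg_distrib]
    simp only [neg_sub]
  linarith

end Clipping

theorem fidelity_lower_bound_general {X : Type*} [Fintype X] (P Q : X → ℝ) (κA ZQ ε : ℝ)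
    (hZ : 0 < ∑ x, P x)
    (hε1 : ε < 1)
    (hbad : ∑ x ∈ Finset.univ.filter (fun x => P x > κA * ZQ * Q x), (P x - κA * ZQ * Q x)
              ≤ ε * ∑ x, P x) :
    let Z := ∑ x, P x
    let N := Z + ∑ x ∈ Finset.univ.filter (fun x => P x > κA * ZQ * Q x),
      (κA * ZQ * Q x - P x)
    let Pt : X → ℝ := fun x => if P x > κA * ZQ * Q x then κA * ZQ * Q x / N else P x / N
    ∑ x, Real.sqrt (Pt x * (P x / Z)) ≥ 1 - ε := by
  intro Z N Pt
  set T : X → ℝ := fun x => κA * ZQ * Q x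
  set m : X → ℝ := fun x => if P x > T x then T x else P x
  have hN : ∑ x, m x = N := sum_ite_gt_eq_add_sum_filter P T
  have hmass : (1 - ε) * Z ≤ N := hN ▸ one_sub_mul_sum_le_sum_ite_gt hbad
  have hPt : ∀ x, Pt x = m x / N := fun x => (ite_div _ _ _ _).symm
  have hfid := sum_div_sum_le_sum_sqrt_mul (fun x => ite_gt_le_self (P x) (T x))
    (hN ▸ (mul_pos (sub_pos.mpr hε1) hZ).trans_le hmass)
  rw [hN] at hfid
  simp only [hPt]
  exact ((le_div_iff₀ hZ).mpr hmass).trans hfid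

theorem fidelity_lower_bound {X : Type*} [Fintype X] (P Q : X → ℝ) (κA ZQ ε : ℝ)
    (hP : ∀ x, 0 ≤ P x) (hQ : ∀ x, 0 < Q x) (hQsum : ∑ x, Q x = 1)
    (hZ : 0 < ∑ x, P x) (hκ : 0 < κA) (hZQ : 0 < ZQ)
    (hε0 : 0 ≤ ε) (hε1 : ε < 1)
    (hbad : ∑ x ∈ Finset.univ.filter (fun x => P x > κA * ZQ * Q x), (P x - κA * ZQ * Q x)
              ≤ ε * ∑ x, P x) :
    let Z := ∑ x, P x
    let N := Z + ∑ x ∈ Finset.univ.filter (fun x => P x > κA * ZQ * Q x),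
      (κA * ZQ * Q x - P x)
    let Pt : X → ℝ := fun x => if P x > κA * ZQ * Q x then κA * ZQ * Q x / N else P x / N
    ∑ x, Real.sqrt (Pt x * (P x / Z)) ≥ 1 - ε :=
  fidelity_lower_bound_general P Q κA ZQ ε hZ hε1 hbad
end

section
/- The total variation distance between the exact normalized distribution P/Z and the approximate rejection-sampling output P̃ is bounded: if ∑_{x∈bad}(P(x) − κ_A·Z_Q·Q(x)) ≤ ε·Z with ε ∈ [0,1), then ∑_x |P̃(x) − P(x)/Z| ≤ 2ε/(1−ε). -/
theorem tv_distance_bound {X : Type*} [Fintype X] (P Q : X → ℝ) (κA ZQ ε : ℝ)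
    (hP : ∀ x, 0 ≤ P x) (hQ : ∀ x, 0 < Q x) (hQsum : ∑ x, Q x = 1)
    (hZ : 0 < ∑ x, P x) (hκ : 0 < κA) (hZQ : 0 < ZQ)
    (hε0 : 0 ≤ ε) (hε1 : ε < 1)
    (hbad : ∑ x ∈ Finset.univ.filter (fun x => P x > κA * ZQ * Q x), (P x - κA * ZQ * Q x)
              ≤ ε * ∑ x, P x) :
    let Z := ∑ x, P x
    let N := ∑ x, min (P x) (κA * ZQ * Q x)
    let Pt : X → ℝ := fun x => min (P x) (κA * ZQ * Q x) / N
    ∑ x, |Pt x - P x / Z| ≤ 2 * ε / (1 - ε) := by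
  intro Z N Pt
  set c := κA * ZQ with hc
  have hcpos : 0 < c := mul_pos hκ hZQ
  set m : X → ℝ := fun x => min (P x) (c * Q x) with hm
  have hm0 : ∀ x, 0 ≤ m x := fun x => le_min (hP x) (mul_pos hcpos (hQ x)).le
  have hmle : ∀ x, m x ≤ P x := fun x => min_le_left _ _
  -- Z - N equals the bad sum
  have hZN : Z - N ≤ ε * Z := by
    have h1 : Z - N = ∑ x, (P x - m x) := by
      simp [Z, N, Finset.sum_sub_distrib]; rfl
    have h2 : ∑ x, (P x - m x)
        = ∑ x ∈ Finset.univ.filter (fun x => P x > c * Q x), (P x - c * Q x) := by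
      rw [Finset.sum_filter]
      refine Finset.sum_congr rfl fun x _ => ?_
      by_cases h : P x > c * Q x
      · simp [h, m, min_eq_right h.le]
      · simp [h, m, min_eq_left (not_lt.mp h)]
    rw [h1, h2]; exact hbad
  have hNle : N ≤ Z := Finset.sum_le_sum fun x _ => hmle x
  have hNpos : 0 < N := by nlinarith
  have hsum_m : ∑ x, m x = N := rfl
  have hterm : ∀ x, |Pt x - P x / Z| ≤ m x * (1/N - 1/Z) + (P x - m x) / Z := by
    intro x
    have heq : Pt x - P x / Z = m x * (1/N - 1/Z) - (P x - m x) / Z := by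
      simp only [Pt]
      field_simp
      ring
    rw [heq]
    have h1 : 0 ≤ m x * (1/N - 1/Z) := by
      apply mul_nonneg (hm0 x)
      have := one_div_le_one_div_of_le hNpos hNle
      linarith
    have h2 : 0 ≤ (P x - m x) / Z := div_nonneg (by linarith [hmle x]) hZ.le
    rw [abs_sub_comm, abs_le]
    constructor <;> nlinarith
  calc ∑ x, |Pt x - P x / Z| ≤ ∑ x, (m x * (1/N - 1/Z) + (P x - m x) / Z) :=
        Finset.sum_le_sum fun x _ => hterm x
    _ = N * (1/N - 1/Z) + (Z - N) / Z := by
        rw [Finset.sum_add_distrib, ← Finset.sum_mul, ← Finset.sum_div,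
          Finset.sum_sub_distrib, hsum_m]
    _ = 2 * (Z - N) / Z := by have hZ' : Z ≠ 0 := hZ.ne'; field_simp; ring
    _ ≤ 2 * ε := by
        rw [div_le_iff₀ hZ]; nlinarith
    _ ≤ 2 * ε / (1 - ε) := by
        rw [le_div_iff₀ (by linarith)]; nlinarith
end
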